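/- Let t and λ be positive integers with t ≥ λ+1. Then a digraph is a (t,λ)-liking digraph if and only if it is a two-way (t,λ)-liking digraph. -/

import Mathlib

open scoped Classical
open Finset

/-- The set of common out-neighbors of the vertex set `S` in the digraph
with arc relation `A`. -/
noncomputable def commonOut {V : Type*} [Fintype V] (A : V → V → Prop) (S : Finset V) : Finset V :=
  Finset.univ.filter fun w => ∀ v ∈ S, A v w

/-- The set of common in-neighbors of the vertex set `S`. -/
noncomputable def commonIn {V : Type*} [Fintype V] (A : V → V → Prop) (S : Finset V) : Finset V :=
  Finset.univ.filter fun w => ∀ v ∈ S, A w v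

/-- A `(t,λ)`-liking digraph: every `t` distinct vertices have exactly `λ`
common out-neighbors. -/
def IsLiking {V : Type*} [Fintype V] (A : V → V → Prop) (t lam : ℕ) : Prop :=
  ∀ S : Finset V, S.card = t → (commonOut A S).card = lam

/-- A two-way `(t,λ)`-liking digraph: every `t` distinct vertices have exactly `λ`
common out-neighbors and exactly `λ` common in-neighbors. -/
def IsTwoWayLiking {V : Type*} [Fintype V] (A : V → V → Prop) (t lam : ℕ) : Prop :=
  IsLiking A t lam ∧ ∀ S : Finset V, S.card = t → (commonIn A S).card = lam

/-- Out-degree of a vertex in the digraph with arc relation `A`. -/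
noncomputable def outDeg {V : Type*} [Fintype V] (A : V → V → Prop) (v : V) : ℕ :=
  (Finset.univ.filter fun w => A v w).card

/-- In-degree of a vertex. -/
noncomputable def inDeg {V : Type*} [Fintype V] (A : V → V → Prop) (v : V) : ℕ :=
  (Finset.univ.filter fun w => A w v).card

/-! For `t ≥ 3` the digraph is complete. Indeed, a `(t-1)`-set `T` has more than `λ` common
out-neighbours: any common out-neighbour `c` of `T` is lost when passing to `insert c T`. So for a
`(t-2)`-set `U`, the sets `commonOut A (insert y U)`, `y ∉ U`, lie in `commonOut A U ⊆ Uᶜ`, have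
more than `λ` elements and pairwise meet in exactly `λ`; by Fisher's inequality `commonOut A U = Uᶜ`.

For `(t, λ) = (2, 1)`, sending an in-neighbour `u` of `v` to the common out-neighbour of `u` and `v`
is injective, so `inDeg ≤ outDeg` at every vertex and hence equality. Double counting pairs then
shows that the sets `commonIn A S`, each of size at most one, have one element on average. -/

-- Fisher's inequality: the Gram matrix of the incidence vectors is `λ J + D` with `D` a positive
-- diagonal matrix, hence invertible.
open Matrix in
theorem Finset.card_le_card_of_card_inter_eq {α ι : Type*} [Fintype ι]
    (C : Finset α) (Z : ι → Finset α) (hZ : ∀ i, Z i ⊆ C) (lam : ℕ)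
    (hinter : ∀ i j, i ≠ j → #(Z i ∩ Z j) = lam) (hcard : ∀ i, lam < #(Z i)) :
    Fintype.card ι ≤ #C := by
  let M : Matrix ι C ℝ := .of fun i w => if (w : α) ∈ Z i then 1 else 0
  have hgram : M * Mᵀ = (lam : ℝ) • vecMulVec 1 1 + diagonal fun i => (#(Z i) - lam : ℝ) := by
    ext i j
    have hentry : (M * Mᵀ) i j = #(Z i ∩ Z j) := by
      have hfilter : C.filter (fun w => w ∈ Z j ∧ w ∈ Z i) = Z i ∩ Z j := by
        ext w
        simp only [mem_filter, mem_inter]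
        exact ⟨fun h => ⟨h.2.2, h.2.1⟩, fun h => ⟨hZ i h.1, h.2, h.1⟩⟩
      simp only [M, mul_apply, transpose_apply, of_apply, ← ite_and, mul_ite, mul_one, mul_zero]
      rw [C.sum_coe_sort (fun w => if w ∈ Z j ∧ w ∈ Z i then (1 : ℝ) else 0), sum_boole,
        hfilter]
    rw [hentry]
    rcases eq_or_ne i j with rfl | hij
    · simp
    · simp [hinter i j hij, hij]
  have hpos : (M * Mᵀ).PosDef := by
    rw [hgram]
    refine PosDef.posSemidef_add ?_ ?_
    · simpa using (posSemidef_vecMulVec_self_star (1 : ι → ℝ)).smul (Nat.cast_nonneg lam)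
    · refine PosDef.diagonal fun i => ?_
      have := hcard i
      simp only [sub_pos]
      exact_mod_cast this
  calc Fintype.card ι = (M * Mᵀ).rank := (rank_of_isUnit _ hpos.isUnit).symm
    _ ≤ M.rank := rank_mul_le_left _ _
    _ ≤ #C := (rank_le_card_width M).trans_eq (Fintype.card_coe C)

section

variable {V : Type*} [Fintype V] {A : V → V → Prop} {S T : Finset V}

@[simp]
theorem mem_commonOut {w : V} : w ∈ commonOut A S ↔ ∀ v ∈ S, A v w := by
  simp [commonOut]

theorem commonIn_eq_commonOut_flip : commonIn A S = commonOut (flip A) S := rfl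

theorem commonOut_anti (h : S ⊆ T) : commonOut A T ⊆ commonOut A S := fun _ hw =>
  mem_commonOut.2 fun v hv => mem_commonOut.1 hw v (h hv)

theorem commonOut_union : commonOut A (S ∪ T) = commonOut A S ∩ commonOut A T := by
  ext w
  simp [or_imp, forall_and]

theorem commonOut_subset_compl (hA : ∀ v, ¬ A v v) : commonOut A S ⊆ Sᶜ := fun w hw =>
  mem_compl.2 fun hwS => hA w (mem_commonOut.1 hw w hwS)

theorem commonOut_eq_compl_of_forall_ne (hA : ∀ v, ¬ A v v) (hcomplete : ∀ u x, u ≠ x → A u x) :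
    commonOut A S = Sᶜ := by
  refine (commonOut_subset_compl hA).antisymm fun w hw => mem_commonOut.2 fun v hv => ?_
  exact hcomplete v w fun hvw => mem_compl.1 hw (hvw ▸ hv)

namespace IsLiking

variable {t lam : ℕ}

theorem lt_card_commonOut (hA : ∀ v, ¬ A v v) (hL : IsLiking A t lam) (hlam : 0 < lam)
    (hn : t ≤ Fintype.card V) (hT : #T + 1 = t) : lam < #(commonOut A T) := by
  obtain ⟨v, -, hvT⟩ := exists_mem_notMem_of_card_lt_card (s := T) (t := univ)
    (by rw [card_univ]; omega)
  obtain ⟨c, hc⟩ : (commonOut A (insert v T)).Nonempty := by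
    rw [← card_pos, hL _ (by rw [card_insert_of_notMem hvT, hT])]
    exact hlam
  replace hc : c ∈ commonOut A T := commonOut_anti (subset_insert v T) hc
  have hcT : c ∉ T := mem_compl.1 (commonOut_subset_compl hA hc)
  have hsub : commonOut A (insert c T) ⊆ (commonOut A T).erase c := fun w hw =>
    mem_erase.2 ⟨fun hwc => hA c (hwc ▸ mem_commonOut.1 hw c (mem_insert_self c T)),
      commonOut_anti (subset_insert c T) hw⟩
  have := card_le_card hsub
  rw [hL _ (by rw [card_insert_of_notMem hcT, hT]), card_erase_of_mem hc] at this
  omega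

theorem commonOut_eq_compl (hA : ∀ v, ¬ A v v) (hL : IsLiking A t lam) (hlam : 0 < lam)
    (hn : t ≤ Fintype.card V) {U : Finset V} (hU : #U + 2 = t) : commonOut A U = Uᶜ := by
  refine eq_of_subset_of_card_le (commonOut_subset_compl hA) ?_
  have hnotMem (y : ↥Uᶜ) : (y : V) ∉ U := mem_compl.1 y.2
  refine (Fintype.card_coe Uᶜ).symm.trans_le <| card_le_card_of_card_inter_eq (commonOut A U)
    (fun y : ↥Uᶜ => commonOut A (insert (y : V) U))
    (fun y => commonOut_anti (subset_insert _ U)) lam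
    (fun y z hyz => by
      rw [← commonOut_union, insert_union, union_insert, union_self]
      refine hL _ ?_
      rw [card_insert_of_notMem, card_insert_of_notMem (hnotMem z), hU]
      rw [mem_insert, not_or]
      exact ⟨fun h => hyz (Subtype.ext h), hnotMem y⟩)
    (fun y => hL.lt_card_commonOut hA hlam hn (by rw [card_insert_of_notMem (hnotMem y), ← hU]))

theorem adj_of_ne (hA : ∀ v, ¬ A v v) (hL : IsLiking A t lam) (hlam : 0 < lam) (ht : 3 ≤ t)
    (hn : t ≤ Fintype.card V) {u x : V} (hux : u ≠ x) : A u x := by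
  obtain ⟨U, huU, hUx, hU⟩ := exists_subsuperset_card_eq (s := {u}) (t := {x}ᶜ) (n := t - 2)
    (by simpa using hux.symm) (by rw [card_singleton]; omega)
    (by rw [card_compl, card_singleton]; omega)
  have hxU : x ∈ Uᶜ := mem_compl.2 fun hx => by simpa using hUx hx
  rw [← hL.commonOut_eq_compl hA hlam hn (by omega)] at hxU
  exact mem_commonOut.1 hxU u (huU (mem_singleton_self u))

theorem isTwoWayLiking_of_three_le (hA : ∀ v, ¬ A v v) (hL : IsLiking A t lam) (hlam : 0 < lam)
    (ht : 3 ≤ t) : IsTwoWayLiking A t lam := by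
  refine ⟨hL, fun S hS => ?_⟩
  have hcomplete : ∀ u x, u ≠ x → A u x := fun _ _ =>
    hL.adj_of_ne hA hlam ht (hS ▸ card_le_univ S)
  rw [commonIn_eq_commonOut_flip, commonOut_eq_compl_of_forall_ne (A := flip A) hA
    fun u x hux => hcomplete x u hux.symm, ← commonOut_eq_compl_of_forall_ne hA hcomplete]
  exact hL S hS

end IsLiking

end

section

variable {V : Type*} [Fintype V]

theorem sum_card_commonOut_powersetCard (A : V → V → Prop) (k : ℕ) :
    ∑ S ∈ powersetCard k univ, #(commonOut A S) = ∑ w, (inDeg A w).choose k := by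
  refine (sum_card_bipartiteAbove_eq_sum_card_bipartiteBelow fun S w => ∀ v ∈ S, A v w).trans ?_
  refine sum_congr rfl fun w _ => ?_
  rw [inDeg, ← card_powersetCard]
  congr 1
  ext S
  simp [bipartiteBelow, mem_powersetCard, subset_iff, and_comm]

theorem sum_inDeg_eq_sum_outDeg (A : V → V → Prop) : ∑ v, inDeg A v = ∑ v, outDeg A v :=
  (sum_card_bipartiteAbove_eq_sum_card_bipartiteBelow A).symm

namespace IsLiking

variable {A : V → V → Prop}

theorem eq_of_adj (hL : IsLiking A 2 1) {a b x y : V} (hab : a ≠ b) (hax : A a x) (hbx : A b x)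
    (hay : A a y) (hby : A b y) : x = y :=
  card_le_one.1 (hL {a, b} (card_pair hab)).le x (by simp [hax, hbx]) y (by simp [hay, hby])

theorem inDeg_le_outDeg (hA : ∀ v, ¬ A v v) (hL : IsLiking A 2 1) (v : V) :
    inDeg A v ≤ outDeg A v := by
  have hcommon (u : V) (huv : A u v) : ∃ z, A u z ∧ A v z := by
    have hu : u ≠ v := fun h => hA v (h ▸ huv)
    obtain ⟨z, hz⟩ := card_pos.1 ((hL {u, v} (card_pair hu)).symm ▸ Nat.one_pos)
    exact ⟨z, by simpa using hz⟩
  choose! z hz using hcommon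
  -- Two in-neighbours `a ≠ b` of `v` with `z a = z b` would have the two common out-neighbours
  -- `v` and `z a`.
  refine card_le_card_of_injOn z (fun u hu => ?_) fun a ha b hb hab => ?_
  · simp only [mem_coe, mem_filter, mem_univ, true_and] at hu ⊢
    exact (hz u hu).2
  · simp only [mem_coe, mem_filter, mem_univ, true_and] at ha hb
    by_contra hne
    have hv := hL.eq_of_adj hne ha hb (hz a ha).1 (hab ▸ (hz b hb).1)
    exact hA v (hv ▸ (hz a ha).2)

theorem inDeg_eq_outDeg (hA : ∀ v, ¬ A v v) (hL : IsLiking A 2 1) (v : V) :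
    inDeg A v = outDeg A v :=
  (sum_eq_sum_iff_of_le fun v _ => hL.inDeg_le_outDeg hA v).1 (sum_inDeg_eq_sum_outDeg A) v
    (mem_univ v)

theorem card_commonIn_le_one (hL : IsLiking A 2 1) {S : Finset V} (hS : #S = 2) :
    #(commonIn A S) ≤ 1 := by
  obtain ⟨x, y, hxy, rfl⟩ := card_eq_two.1 hS
  refine card_le_one.2 fun a ha b hb => by_contra fun hab => hxy ?_
  simp only [commonIn, mem_filter, mem_univ, true_and, mem_insert, mem_singleton,
    forall_eq_or_imp, forall_eq] at ha hb
  exact hL.eq_of_adj hab ha.1 hb.1 ha.2 hb.2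

theorem isTwoWayLiking_two_one (hA : ∀ v, ¬ A v v) (hL : IsLiking A 2 1) :
    IsTwoWayLiking A 2 1 := by
  refine ⟨hL, fun S hS => ?_⟩
  have hsum : ∑ S ∈ powersetCard 2 univ, #(commonIn A S) =
      ∑ S ∈ powersetCard 2 (univ : Finset V), 1 := by
    calc ∑ S ∈ powersetCard 2 univ, #(commonIn A S)
        = ∑ w, (outDeg A w).choose 2 := sum_card_commonOut_powersetCard (flip A) 2
      _ = ∑ w, (inDeg A w).choose 2 := by simp only [hL.inDeg_eq_outDeg hA]
      _ = ∑ S ∈ powersetCard 2 univ, #(commonOut A S) := (sum_card_commonOut_powersetCard A 2).symm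
      _ = ∑ S ∈ powersetCard 2 univ, 1 :=
        sum_congr rfl fun S hS => hL S (mem_powersetCard.1 hS).2
  exact (sum_eq_sum_iff_of_le fun S hS => hL.card_commonIn_le_one (mem_powersetCard.1 hS).2).1
    hsum S (mem_powersetCard.2 ⟨subset_univ S, hS⟩)

end IsLiking

end

/-- For `t ≥ λ+1`, a digraph is a `(t,λ)`-liking digraph iff it is a two-way
`(t,λ)`-liking digraph. -/
theorem stmt_9 {V : Type*} [Fintype V] (A : V → V → Prop) (hA : Irreflexive A)
    (t lam : ℕ) (hlam : 0 < lam) (ht : lam + 1 ≤ t) :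
    IsLiking A t lam ↔ IsTwoWayLiking A t lam := by
  refine ⟨fun hL => ?_, And.left⟩
  rcases Nat.lt_or_ge t 3 with ht3 | ht3
  · obtain ⟨rfl, rfl⟩ : t = 2 ∧ lam = 1 := by omega
    exact hL.isTwoWayLiking_two_one hA
  · exact hL.isTwoWayLiking_of_three_le hA hlam ht3
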